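/- arXiv:2206.04798 — 3 statements merged into one kernel-verified Lean document; each statement's English description precedes it below -/
import Mathlib

section
/- Let (S, ⊕, ⊗, 0, 1) be a commutative semiring and let w : E → S assign weights to edges of a finite directed multigraph G = (V, E). Define the weight of a path P = (e₁, …, e_k) as w(P) = ⊗_{i=1}^k w(e_i) (empty product equals 1). For any node u and any t ≥ 0, the Bellman-Ford iterate h⁽ᵗ⁾(u,v), defined by h⁽⁰⁾(u,v) = 1 if u = v else 0, and h⁽ᵗ⁾(u,v) = h⁽⁰⁾(u,v) ⊕ ⊕_{(x,r,v)∈E(v)} h⁽ᵗ⁻¹⁾(u,x) ⊗ w(x,r,v), equals the ⊕-sum of w(P) over all paths P from u to v of length at most t. -/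
/-- `IsPath tl hd u v p`: the list of edges `p` forms a path from `u` to `v`
in the directed multigraph with tail map `tl` and head map `hd`. -/
def IsPath {V E : Type*} (tl hd : E → V) : V → V → List E → Prop
  | u, v, [] => u = v
  | u, v, e :: p => tl e = u ∧ IsPath tl hd (hd e) v p

/-- The weight of a path is the `⊗`-product of its edge weights (empty product is `1`). -/
def pathWeight {E : Type*} {S : Type*} [CommSemiring S] (w : E → S) (p : List E) : S :=
  (p.map w).prod

/-- The Bellman-Ford iterate over a commutative semiring. -/
def bf {V E : Type*} [Fintype E] [DecidableEq V] {S : Type*} [CommSemiring S]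
    (tl hd : E → V) (w : E → S) (u : V) : ℕ → V → S
  | 0, v => if u = v then 1 else 0
  | t + 1, v => (if u = v then 1 else 0) +
      ∑ e ∈ Finset.univ.filter (fun e => hd e = v),
        bf tl hd w u t (tl e) * w e

/-!
A nonempty path splits uniquely into a shorter path followed by its last edge, whose head is
the endpoint. Hence the paths from `u` to `v` with at most `t + 1` edges are the empty path (if
`u = v`) together with the disjoint union, over the edges `e` into `v`, of the paths from `u` to
the tail of `e` with at most `t` edges, each extended by `e`. Summing weights over this
decomposition gives the Bellman-Ford recursion, so induction on `t` proves the theorem.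
-/

lemma finsum_mem_biUnion_image_append_singleton {α M : Type*} [AddCommMonoid M] (s : Finset α)
    (A : α → Set (List α)) (hA : ∀ a ∈ s, (A a).Finite) (f : List α → M) :
    ∑ᶠ p ∈ ⋃ a ∈ (s : Set α), (· ++ [a]) '' A a, f p = ∑ a ∈ s, ∑ᶠ q ∈ A a, f (q ++ [a]) := by
  have hdisj : (s : Set α).PairwiseDisjoint fun a => (· ++ [a]) '' A a := by
    rintro a - b - hab
    refine Set.disjoint_left.mpr ?_
    rintro _ ⟨p, -, rfl⟩ ⟨q, -, hqp⟩
    exact hab (List.append_singleton_inj.mp hqp).2.symm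
  rw [finsum_mem_biUnion hdisj s.finite_toSet fun a ha => (hA a ha).image _,
    finsum_mem_coe_finset]
  exact Finset.sum_congr rfl fun a _ =>
    finsum_mem_image fun _ _ _ _ h => (List.append_singleton_inj.mp h).1

lemma pathWeight_append_singleton {E S : Type*} [CommSemiring S] (w : E → S) (p : List E)
    (e : E) : pathWeight w (p ++ [e]) = pathWeight w p * w e := by
  simp [pathWeight]

section Paths

variable {V E : Type*} (tl hd : E → V)

lemma isPath_append_singleton {u v : V} {p : List E} {e : E} :
    IsPath tl hd u v (p ++ [e]) ↔ IsPath tl hd u (tl e) p ∧ hd e = v := by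
  induction p generalizing u with
  | nil => simp only [List.nil_append, IsPath]; tauto
  | cons f q ih => simp only [List.cons_append, IsPath, ih, and_assoc]

def pathsLE (u v : V) (t : ℕ) : Set (List E) :=
  {p | IsPath tl hd u v p ∧ p.length ≤ t}

lemma pathsLE_finite [Finite E] (u v : V) (t : ℕ) : (pathsLE tl hd u v t).Finite :=
  (List.finite_length_le E t).subset fun _ hp => hp.2

lemma finsum_pathWeight_pathsLE_zero [DecidableEq V] {S : Type*} [CommSemiring S] (w : E → S)
    (u v : V) : ∑ᶠ p ∈ pathsLE tl hd u v 0, pathWeight w p = if u = v then 1 else 0 := by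
  have hpaths : pathsLE tl hd u v 0 = if u = v then {[]} else ∅ := by
    ext p
    cases p <;> split_ifs <;> simp_all [pathsLE, IsPath]
  rw [hpaths]
  split_ifs <;> simp [pathWeight]

lemma pathsLE_succ [Fintype E] [DecidableEq V] (u v : V) (t : ℕ) :
    pathsLE tl hd u v (t + 1) = pathsLE tl hd u v 0 ∪
      ⋃ e ∈ (Finset.univ.filter fun e => hd e = v : Set E),
        (· ++ [e]) '' pathsLE tl hd u (tl e) t := by
  ext p
  rcases List.eq_nil_or_concat p with rfl | ⟨q, e, rfl⟩
  · simp [pathsLE]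
  · simpa [pathsLE, isPath_append_singleton] using and_right_comm

lemma disjoint_pathsLE_zero_biUnion_image_append_singleton (u v : V) (s : Set E)
    (A : E → Set (List E)) : Disjoint (pathsLE tl hd u v 0) (⋃ e ∈ s, (· ++ [e]) '' A e) := by
  refine Set.disjoint_left.mpr ?_
  rintro p ⟨-, hp⟩
  rw [Nat.le_zero, List.length_eq_zero_iff] at hp
  simp [hp]

end Paths

/-- Bellman-Ford correctness: `h⁽ᵗ⁾(u,v)` equals the `⊕`-sum of path weights over
all paths from `u` to `v` of length at most `t`. -/
theorem bellman_ford_eq_sum_over_paths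
    {V E : Type*} [Fintype E] [DecidableEq V] {S : Type*} [CommSemiring S]
    (tl hd : E → V) (w : E → S) (u v : V) (t : ℕ) :
    bf tl hd w u t v =
      ∑ᶠ p ∈ {p : List E | IsPath tl hd u v p ∧ p.length ≤ t}, pathWeight w p := by
  change _ = ∑ᶠ p ∈ pathsLE tl hd u v t, pathWeight w p
  induction t generalizing v with
  | zero => rw [bf, finsum_pathWeight_pathsLE_zero]
  | succ t ih =>
    rw [bf, pathsLE_succ, finsum_mem_union (f := pathWeight w)
      (disjoint_pathsLE_zero_biUnion_image_append_singleton tl hd u v _ _)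
      (pathsLE_finite tl hd u v 0)
      ((Finset.finite_toSet _).biUnion fun e _ => (pathsLE_finite tl hd u (tl e) t).image _),
      finsum_pathWeight_pathsLE_zero,
      finsum_mem_biUnion_image_append_singleton _ _ fun e _ => pathsLE_finite tl hd u (tl e) t]
    congr 1
    refine Finset.sum_congr rfl fun e _ => ?_
    simp only [pathWeight_append_singleton, ih,
      finsum_mem_mul' _ _ (pathsLE_finite tl hd u (tl e) t)]
end

section
/- With the same semiring setup, if P_{u⇝v}^{(≤t)} denotes the set of all paths from u to v with at most t edges, then the Bellman-Ford iterate satisfies h⁽ᵗ⁾(u,v) = ⊕_{P ∈ P_{u⇝v}^{(≤t)}} w(P), and in particular for u ≠ v, h⁽⁰⁾(u,v) = 0 corresponds to the empty ⊕-sum over the empty path set. -/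
section aux
variable {V E : Type*} (tl hd : E → V)

lemma isPath_concat (u v : V) (e : E) (p : List E) :
    IsPath tl hd u v (p ++ [e]) ↔ IsPath tl hd u (tl e) p ∧ hd e = v := by
  induction p generalizing u with
  | nil => simp [IsPath]; tauto
  | cons f q ih => simp [IsPath, ih]; tauto

lemma pathSet_finite [Finite E] (u v : V) (t : ℕ) :
    {p : List E | IsPath tl hd u v p ∧ p.length ≤ t}.Finite :=
  (List.finite_length_le _ t).subset (fun p hp => hp.2)

end aux

/-- The Bellman-Ford iterate equals the `⊕`-sum of path weights over the set
`P_{u⇝v}^{(≤t)}` of paths of length at most `t`; in particular, for `u ≠ v` the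
boundary condition `h⁽⁰⁾(u,v) = 0` corresponds to the empty sum over the empty
path set. -/
theorem bellman_ford_eq_sum_and_boundary
    {V E : Type*} [Fintype E] [DecidableEq V] {S : Type*} [CommSemiring S]
    (tl hd : E → V) (w : E → S) (u v : V) (t : ℕ) :
    (bf tl hd w u t v =
      ∑ᶠ p ∈ {p : List E | IsPath tl hd u v p ∧ p.length ≤ t}, pathWeight w p) ∧
    (u ≠ v →
      bf tl hd w u 0 v = 0 ∧
      {p : List E | IsPath tl hd u v p ∧ p.length ≤ 0} = ∅) := by
  have key : ∀ (t : ℕ) (v : V), bf tl hd w u t v =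
      ∑ᶠ p ∈ {p : List E | IsPath tl hd u v p ∧ p.length ≤ t}, pathWeight w p := by
    intro t
    induction t with
    | zero =>
      intro v
      by_cases h : u = v
      · have : {p : List E | IsPath tl hd u v p ∧ p.length ≤ 0} = {([] : List E)} := by
          ext p; cases p <;> simp [IsPath, h]
        rw [this, finsum_mem_singleton]
        simp [bf, h, pathWeight]
      · have : {p : List E | IsPath tl hd u v p ∧ p.length ≤ 0} = ∅ := by
          ext p; cases p <;> simp [IsPath, h]
        rw [this, finsum_mem_empty]
        simp [bf, h]
    | succ t ih =>
      intro v
      -- decompose the path set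
      have hsplit : {p : List E | IsPath tl hd u v p ∧ p.length ≤ t + 1} =
          (if u = v then {([] : List E)} else ∅) ∪
            ⋃ e ∈ {e : E | hd e = v},
              (fun p => p ++ [e]) '' {p : List E | IsPath tl hd u (tl e) p ∧ p.length ≤ t} := by
        ext p
        simp only [Set.mem_setOf_eq, Set.mem_union, Set.mem_iUnion, Set.mem_image]
        constructor
        · rintro ⟨hp, hl⟩
          rcases List.eq_nil_or_concat' p with rfl | ⟨q, e, rfl⟩
          · left
            have : u = v := hp
            simp [this]
          · right
            rw [isPath_concat] at hp
            refine ⟨e, hp.2, q, ⟨hp.1, ?_⟩, rfl⟩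
            simp only [List.length_append, List.length_singleton] at hl; omega
        · rintro (h | ⟨e, he, q, ⟨hq, hl⟩, rfl⟩)
          · split at h
            · next huv =>
                rw [Set.mem_singleton_iff] at h
                subst h
                exact ⟨huv, by simp⟩
            · exact absurd h (Set.notMem_empty _)
          · exact ⟨(isPath_concat tl hd u v e q).mpr ⟨hq, he⟩, by simp; omega⟩
      have hdisj : Disjoint (if u = v then {([] : List E)} else ∅)
          (⋃ e ∈ {e : E | hd e = v},
              (fun p => p ++ [e]) '' {p : List E | IsPath tl hd u (tl e) p ∧ p.length ≤ t}) := by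
        rw [Set.disjoint_left]
        intro p hp hp2
        simp only [Set.mem_iUnion, Set.mem_image] at hp2
        obtain ⟨e, _, q, _, rfl⟩ := hp2
        split at hp <;> simp_all
      have hpair : ({e : E | hd e = v}).PairwiseDisjoint
          (fun e => (fun p => p ++ [e]) '' {p : List E | IsPath tl hd u (tl e) p ∧ p.length ≤ t}) := by
        intro e _ f _ hef
        rw [Function.onFun, Set.disjoint_left]
        rintro p ⟨q, _, rfl⟩ ⟨r, _, heq⟩
        refine hef ?_
        have h2 := congrArg (fun l => l.getLast?) heq
        simpa [eq_comm] using h2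
      have hfin : ∀ e ∈ {e : E | hd e = v},
          ((fun p => p ++ [e]) '' {p : List E | IsPath tl hd u (tl e) p ∧ p.length ≤ t}).Finite :=
        fun e _ => ((pathSet_finite tl hd u (tl e) t).image _)
      rw [hsplit, finsum_mem_union hdisj (by split <;> simp)
          (Set.Finite.biUnion (Set.toFinite _) hfin),
        finsum_mem_biUnion hpair (Set.toFinite _) hfin]
      have h1 : (∑ᶠ p ∈ (if u = v then {([] : List E)} else ∅ : Set (List E)), pathWeight w p)
          = (if u = v then (1 : S) else 0) := by
        split <;> simp [finsum_mem_singleton, finsum_mem_empty, pathWeight]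
      have h2 : ∀ e : E, (∑ᶠ p ∈ ((fun p => p ++ [e]) ''
            {p : List E | IsPath tl hd u (tl e) p ∧ p.length ≤ t}), pathWeight w p)
          = bf tl hd w u t (tl e) * w e := by
        intro e
        rw [finsum_mem_image (fun p _ q _ h => by simpa using h), ih]
        rw [finsum_mem_eq_finite_toFinset_sum _ (pathSet_finite tl hd u (tl e) t),
          finsum_mem_eq_finite_toFinset_sum _ (pathSet_finite tl hd u (tl e) t),
          Finset.sum_mul]
        refine Finset.sum_congr rfl fun p _ => ?_
        simp [pathWeight]
      have h3 : (∑ᶠ e ∈ {e : E | hd e = v}, ∑ᶠ p ∈ ((fun p => p ++ [e]) ''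
            {p : List E | IsPath tl hd u (tl e) p ∧ p.length ≤ t}), pathWeight w p)
          = ∑ e ∈ Finset.univ.filter (fun e => hd e = v), bf tl hd w u t (tl e) * w e := by
        have : {e : E | hd e = v} = ↑(Finset.univ.filter (fun e => hd e = v)) := by
          ext e; simp
        rw [this, finsum_mem_coe_finset]
        exact Finset.sum_congr rfl fun e _ => h2 e
      rw [h1, h3, bf]
  refine ⟨key t v, fun huv => ⟨by simp [bf, huv], ?_⟩⟩
  ext p; cases p <;> simp [IsPath, huv]
end

section
/- With the padding-free offset encoding (offset c = M − m + 1, encode value a of sample i as a + c·i), sorting the concatenated encoded batch yields a list in which all elements of sample i precede all elements of sample j whenever i < j, and within each sample the original values appear in sorted order after subtracting the offsets. -/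
lemma coe_flatten_ms (L : List (List ℤ)) :
    ((L.flatten : List ℤ) : Multiset ℤ) = (L.map (Multiset.ofList)).sum := by
  induction L with
  | nil => simp
  | cons h t ih => simp only [List.flatten_cons, List.map_cons, List.sum_cons, ← ih]; rfl

/-- Sorting the offset-encoded concatenated batch: the sorted list of the encoded
multiset is exactly the concatenation, over samples `i` in order, of the sorted values
of sample `i` shifted by the offset `c·i`. In particular all elements of sample `i`
precede those of sample `j` for `i < j`, and within each sample the original sorted
order is preserved. -/
theorem sort_offset_encoded_batch
    (n : ℕ) (m M : ℤ) (hmM : m ≤ M) (c : ℤ) (hc : c = M - m + 1)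
    (A : Fin n → Multiset ℤ) (hA : ∀ i, ∀ a ∈ A i, a ∈ Set.Icc m M) :
    Multiset.sort (α := ℤ)
        (∑ i : Fin n, (A i).map (fun a => a + c * ((i : ℕ) : ℤ))) (· ≤ ·) =
      (List.ofFn (fun i : Fin n =>
        (Multiset.sort (α := ℤ) (A i) (· ≤ ·)).map
          (fun a => a + c * ((i : ℕ) : ℤ)))).flatten := by
  set g : Fin n → List ℤ := fun i =>
    (Multiset.sort (α := ℤ) (A i) (· ≤ ·)).map (fun a => a + c * ((i : ℕ) : ℤ)) with hg
  have hperm : ((List.ofFn g).flatten : Multiset ℤ)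
      = ∑ i : Fin n, (A i).map (fun a => a + c * ((i : ℕ) : ℤ)) := by
    rw [coe_flatten_ms, List.map_ofFn]
    rw [List.sum_ofFn]
    congr 1
    funext i
    simp [hg, ← Multiset.map_coe]
  have hsorted : List.Pairwise (· ≤ ·) (List.ofFn g).flatten := by
    rw [List.pairwise_flatten]
    constructor
    · intro l hl
      rw [List.mem_ofFn] at hl
      obtain ⟨i, rfl⟩ := hl
      exact (Multiset.pairwise_sort _ _).map _ (fun _ _ h => by omega)
    · rw [List.pairwise_ofFn]
      intro i j hij x hx y hy
      simp only [hg, List.mem_map, Multiset.mem_sort] at hx hy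
      obtain ⟨a, ha, rfl⟩ := hx
      obtain ⟨b, hb, rfl⟩ := hy
      have h1 := hA i a ha
      have h2 := hA j b hb
      simp only [Set.mem_Icc] at h1 h2
      have hij' : ((i : ℕ) : ℤ) + 1 ≤ ((j : ℕ) : ℤ) := by exact_mod_cast hij
      nlinarith [mul_le_mul_of_nonneg_left hij' (by omega : (0:ℤ) ≤ c)]
  refine List.Perm.eq_of_pairwise' (Multiset.pairwise_sort _ _) hsorted ?_
  rw [← Multiset.coe_eq_coe] at *
  rw [hperm, Multiset.sort_eq]
end
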